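/- arXiv:2002.11230 — 2 statements merged into one kernel-verified Lean document; each statement's English description precedes it below -/
import Mathlib

section
/- Let Γ be a group, R a unital Γ-graded ring, γ₁,…,γₙ ∈ Γ, and δ ∈ Γ such that the component R_δ contains an element invertible in R. Then the graded matrix rings Mₙ(R)(γ₁,γ₂,…,γₙ) and Mₙ(R)(γ₁δ,γ₂,…,γₙ) are graded isomorphic. -/
open Pointwise

structure RingGrading (Γ : Type) [Group Γ] (R : Type) [Ring R] where
  component : Γ → AddSubgroup R
  one_mem : (1 : R) ∈ component 1
  mul_mem : ∀ {γ δ : Γ} {a b : R}, a ∈ component γ → b ∈ component δ →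
    a * b ∈ component (γ * δ)
  iSup_eq_top : (⨆ γ : Γ, component γ) = ⊤
  independent : iSupIndep component

variable {Γ : Type} [Group Γ] {R : Type} [Ring R]

def matrixComponent (g : RingGrading Γ R) (n : ℕ) (γv : Fin n → Γ) (δ : Γ) :
    AddSubgroup (Matrix (Fin n) (Fin n) R) where
  carrier := {M | ∀ i j, M i j ∈ g.component ((γv i)⁻¹ * δ * γv j)}
  add_mem' := by
    intro a b ha hb i j
    simpa [Matrix.add_apply] using add_mem (ha i j) (hb i j)
  zero_mem' := by
    intro i j
    simpa using zero_mem (g.component ((γv i)⁻¹ * δ * γv j))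
  neg_mem' := by
    intro a ha i j
    simpa [Matrix.neg_apply] using neg_mem (ha i j)

/-- A `Γ`-graded ring (given by its components) is strongly graded if
`R_γ R_δ = R_{γδ}` for all `γ, δ`; since the inclusion `R_γ R_δ ⊆ R_{γδ}` always
holds in a graded ring, this is the nontrivial inclusion. -/
def StronglyGraded {S : Type} [Ring S] (c : Γ → AddSubgroup S) : Prop :=
  ∀ γ δ : Γ, c (γ * δ) ≤ AddSubgroup.closure ((c γ : Set S) * (c δ : Set S))

/-- A unital graded ring is a crossed product if every component contains an invertible
element. -/
def IsCrossedProduct {S : Type} [Ring S] (c : Γ → AddSubgroup S) : Prop :=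
  ∀ γ : Γ, ∃ u : Sˣ, (u : S) ∈ c γ

/-- Graded unit-regular: every `a ∈ R_γ` satisfies `a = a u a` for some unit `u ∈ R_{γ⁻¹}`. -/
def GradedUnitRegular {S : Type} [Ring S] (c : Γ → AddSubgroup S) : Prop :=
  ∀ (γ : Γ) (a : S), a ∈ c γ → ∃ u : Sˣ, (u : S) ∈ c γ⁻¹ ∧ a = a * u * a

/-- A `Γ`-graded division ring: a graded ring in which every nonzero homogeneous element
is invertible. -/
structure GradedDivRing (Γ : Type) [Group Γ] (K : Type) [Ring K] extends
    RingGrading Γ K where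
  isUnit_of_homogeneous : ∀ {γ : Γ} {a : K}, a ∈ component γ → a ≠ 0 → IsUnit a

/-- The support `Γ_R = {γ | R_γ ≠ 0}` of a grading. -/
def RingGrading.support (g : RingGrading Γ R) : Set Γ := {γ : Γ | g.component γ ≠ ⊥}

def IsGradedIso {Γ R S : Type} [AddGroup R] [Mul R] [AddGroup S] [Mul S]
    (cR : Γ → AddSubgroup R) (cS : Γ → AddSubgroup S) : Prop :=
  ∃ e : R ≃+* S, ∀ (γ : Γ) (x : R), x ∈ cR γ ↔ e x ∈ cS γ

/-- The identity component `R_ε` of the graded matrix ring, as a subring. -/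
def matrixIdentitySubring (g : RingGrading Γ R) (n : ℕ) (γv : Fin n → Γ) :
    Subring (Matrix (Fin n) (Fin n) R) where
  carrier := matrixComponent g n γv 1
  add_mem' := add_mem
  zero_mem' := zero_mem _
  neg_mem' := neg_mem
  one_mem' := by
    intro i j
    by_cases h : i = j
    · subst h
      rw [Matrix.one_apply_eq]
      have hh : (γv i)⁻¹ * 1 * γv i = 1 := by group
      rw [hh]; exact g.one_mem
    · rw [Matrix.one_apply_ne h]
      exact zero_mem _
  mul_mem' := by
    intro a b ha hb i j
    show (a * b) i j ∈ _
    rw [Matrix.mul_apply]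
    refine AddSubgroup.sum_mem _ fun k _ => ?_
    have h := g.mul_mem (ha i k) (hb k j)
    have hh : (γv i)⁻¹ * 1 * γv k * ((γv k)⁻¹ * 1 * γv j) = (γv i)⁻¹ * 1 * γv j := by group
    rwa [hh] at h

/-- The degree-`γ` component `A·γ` of the group ring `A[Γ]`. -/
def monoidAlgebraComponent (A : Type) [Ring A] (Γ : Type) [Group Γ] (γ : Γ) :
    AddSubgroup (MonoidAlgebra A Γ) where
  carrier := {f | ∀ δ : Γ, δ ≠ γ → f.coeff δ = 0}
  add_mem' := by
    intro f h hf hh δ hδ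
    show (f + h).coeff δ = 0
    rw [MonoidAlgebra.coeff_add, Finsupp.add_apply, hf δ hδ, hh δ hδ, add_zero]
  zero_mem' := fun δ _ => rfl
  neg_mem' := by
    intro f hf δ hδ
    show (-f).coeff δ = 0
    rw [MonoidAlgebra.coeff_neg, Finsupp.neg_apply, hf δ hδ, neg_zero]

/-!
Conjugating by the diagonal matrix `diag(u⁻¹, 1, …, 1)` multiplies the `(1, j)` entries by
`u⁻¹ ∈ R_{δ⁻¹}` on the left and the `(i, 1)` entries by `u ∈ R_δ` on the right, which is exactly
the shift `γ₁ ↦ γ₁δ` of the matrix grading. The one point needing an argument is that `u⁻¹` is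
homogeneous: split `u⁻¹ = a + b` with `a ∈ R_{δ⁻¹}` and `b` in the sum of the other components;
then `1 - ua = ub` lies in `R_1 ∩ ⨆_{β ≠ 1} R_β = 0`, so `b = 0`.
-/

namespace RingGrading

variable (g : RingGrading Γ R)

theorem units_inv_mem {u : Rˣ} {δ : Γ} (hu : (u : R) ∈ g.component δ) :
    ((u⁻¹ : Rˣ) : R) ∈ g.component δ⁻¹ := by
  have hsplit := iSup_split_single g.component δ⁻¹
  rw [g.iSup_eq_top] at hsplit
  obtain ⟨a, ha, b, hb, hab⟩ :=
    AddSubgroup.mem_sup.mp (hsplit ▸ AddSubgroup.mem_top ((u⁻¹ : Rˣ) : R))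
  have hmulLeft : ⨆ (γ) (_ : γ ≠ δ⁻¹), g.component γ ≤
      (⨆ (β) (_ : β ≠ 1), g.component β).comap (AddMonoidHom.mulLeft (u : R)) :=
    iSup₂_le fun γ hγ x hx => by
      have hne : δ * γ ≠ 1 := by rwa [Ne, ← eq_inv_mul_iff_mul_eq, mul_one]
      exact le_iSup₂ (f := fun β (_ : β ≠ 1) => g.component β) _ hne (g.mul_mem hu hx)
  have hub : (u : R) * b ∈ ⨆ (β) (_ : β ≠ 1), g.component β := hmulLeft hb
  have hua : (u : R) * a ∈ g.component 1 := by
    simpa using g.mul_mem hu ha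
  have hub_zero : (u : R) * b = 0 := by
    refine AddSubgroup.disjoint_def.mp (g.independent 1) ?_ hub
    have : (u : R) * b = 1 - (u : R) * a := by
      rw [eq_sub_iff_add_eq', ← mul_add, hab, Units.mul_inv]
    exact this ▸ sub_mem g.one_mem hua
  rw [← hab, (Units.mul_right_eq_zero u).mp hub_zero, add_zero]
  exact ha

theorem units_mul_mem_iff {u : Rˣ} {δ : Γ} (hu : (u : R) ∈ g.component δ) {γ : Γ} {x : R} :
    (u : R) * x ∈ g.component (δ * γ) ↔ x ∈ g.component γ := by
  refine ⟨fun h => ?_, g.mul_mem hu⟩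
  simpa using g.mul_mem (g.units_inv_mem hu) h

theorem mul_units_mem_iff {u : Rˣ} {δ : Γ} (hu : (u : R) ∈ g.component δ) {γ : Γ} {x : R} :
    x * (u : R) ∈ g.component (γ * δ) ↔ x ∈ g.component γ := by
  refine ⟨fun h => ?_, fun h => g.mul_mem h hu⟩
  simpa [mul_assoc] using g.mul_mem h (g.units_inv_mem hu)

end RingGrading

theorem mem_matrixComponent {g : RingGrading Γ R} {n : ℕ} {γv : Fin n → Γ} {δ : Γ}
    {M : Matrix (Fin n) (Fin n) R} :
    M ∈ matrixComponent g n γv δ ↔ ∀ i j, M i j ∈ g.component ((γv i)⁻¹ * δ * γv j) :=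
  Iff.rfl

namespace Matrix

variable {ι S : Type*} [Fintype ι] [DecidableEq ι] [Semiring S]

def diagonalUnitsConj (u : ι → Sˣ) : Matrix ι ι S ≃+* Matrix ι ι S :=
  MulSemiringAction.toRingEquiv _ _ <| ConjAct.toConjAct <|
    Units.map (diagonalRingHom ι S).toMonoidHom (MulEquiv.piUnits.symm u⁻¹)

theorem diagonalUnitsConj_apply (u : ι → Sˣ) (M : Matrix ι ι S) (i j : ι) :
    diagonalUnitsConj u M i j = ((u i)⁻¹ : Sˣ) * M i j * u j := by
  simp [diagonalUnitsConj, ConjAct.units_smul_def, diagonal_mul, mul_diagonal]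

end Matrix

theorem isGradedIso_matrixComponent_of_units (g : RingGrading Γ R) {n : ℕ}
    (γv γv' : Fin n → Γ) (u : Fin n → Rˣ)
    (hu : ∀ i, (u i : R) ∈ g.component ((γv i)⁻¹ * γv' i)) :
    IsGradedIso (matrixComponent g n γv) (matrixComponent g n γv') := by
  refine ⟨Matrix.diagonalUnitsConj u, fun σ M => ?_⟩
  simp only [mem_matrixComponent, Matrix.diagonalUnitsConj_apply]
  refine forall₂_congr fun i j => ?_
  have hdeg : (γv' i)⁻¹ * σ * γv' j
      = ((γv i)⁻¹ * γv' i)⁻¹ * ((γv i)⁻¹ * σ * γv j) * ((γv j)⁻¹ * γv' j) := by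
    group
  rw [hdeg, g.mul_units_mem_iff (hu j), g.units_mul_mem_iff (g.units_inv_mem (hu i))]

/-- If `R` is a unital `Γ`-graded ring and `R_δ` contains an invertible
element, then `Mₙ(R)(γ₁, γ₂, …, γₙ) ≅_gr Mₙ(R)(γ₁δ, γ₂, …, γₙ)`. -/
theorem matrix_grading_unit_shift {Γ : Type} [Group Γ] {R : Type} [Ring R]
    (g : RingGrading Γ R) {n : ℕ} (γv : Fin (n + 1) → Γ) (δ : Γ)
    (u : Rˣ) (hu : (u : R) ∈ g.component δ) :
    IsGradedIso (matrixComponent g (n + 1) γv)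
      (matrixComponent g (n + 1) (Function.update γv 0 (γv 0 * δ))) := by
  refine isGradedIso_matrixComponent_of_units g _ _ (Pi.mulSingle 0 u) fun i => ?_
  rcases eq_or_ne i 0 with rfl | hi
  · simpa using hu
  · simpa [hi] using g.one_mem
end

section
/- Let K be a field, m and n positive integers, and γ₁,…,γₙ integers. For each j ∈ {0,…,m−1} let k_j be the number of indices i with γᵢ ≡ j (mod m). Then the ℤ-graded ring R = Mₙ(K[x^m, x^{−m}])(γ₁,…,γₙ) is strongly graded if and only if k_j > 0 for every j ∈ {0,…,m−1}. -/
/-!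
A `ℤ`-graded ring `R` is strongly graded iff `1 ∈ R_d R_{-d}` for every `d`. In
`Mₙ(K[x^m, x^{-m}])(γ)` a matrix of degree `d` can have a nonzero `(i, j)` entry only if
`m ∣ -γᵢ + d + γⱼ`, and such an entry may be a unit `x^{mk}`. If for every `i` there is such a `j`,
then `1 = ∑ᵢ (x^{mk} e_{ij}) (x^{-mk} e_{ji}) ∈ R_d R_{-d}`; otherwise row `i` vanishes on all of
`R_d R_{-d}`. Finally, "every row `i` has such a `j` for every `d`" says that the `γⱼ` meet every
residue class mod `m`.
-/

open Pointwise

noncomputable section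

def matrixComponentZ {R : Type} [Ring R] (c : ℤ → AddSubgroup R) (n : ℕ)
    (γv : Fin n → ℤ) (δ : ℤ) : AddSubgroup (Matrix (Fin n) (Fin n) R) where
  carrier := {M | ∀ i j, M i j ∈ c (-(γv i) + δ + γv j)}
  add_mem' := by
    intro a b ha hb i j
    simpa [Matrix.add_apply] using add_mem (ha i j) (hb i j)
  zero_mem' := by
    intro i j
    simpa using zero_mem (c (-(γv i) + δ + γv j))
  neg_mem' := by
    intro a ha i j
    simpa [Matrix.neg_apply] using neg_mem (ha i j)

/-- The graded field `K[x^m, x^{-m}]`, realized as the Laurent polynomial ring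
`AddMonoidAlgebra K ℤ` in which the basis element `single k` stands for `x^{m k}`.
Its degree-`d` component is `K·x^d` if `m ∣ d` (i.e. `d = m k`) and `0` otherwise. -/
def laurentComponent (K : Type) [Field K] (m : ℕ) (d : ℤ) :
    AddSubgroup (AddMonoidAlgebra K ℤ) where
  carrier := {f | ∀ k : ℤ, (m : ℤ) * k ≠ d → f.coeff k = 0}
  add_mem' := by
    intro f h hf hh k hk
    show (f.coeff + h.coeff) k = 0
    rw [Finsupp.add_apply, hf k hk, hh k hk, add_zero]
  zero_mem' := fun k _ => rfl
  neg_mem' := by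
    intro f hf k hk
    show (-f.coeff) k = 0
    rw [Finsupp.neg_apply, hf k hk, neg_zero]

theorem laurentComponent_mul {K : Type} [Field K] {m : ℕ} {a b : ℤ}
    {f g : AddMonoidAlgebra K ℤ} (hf : f ∈ laurentComponent K m a)
    (hg : g ∈ laurentComponent K m b) : f * g ∈ laurentComponent K m (a + b) := by
  intro k hk
  by_contra hne
  have hks : k ∈ (f * g).coeff.support := Finsupp.mem_support_iff.mpr hne
  have hmem := AddMonoidAlgebra.support_coeff_mul_subset f g hks
  rw [Finset.mem_add] at hmem
  obtain ⟨k₁, hk₁, k₂, hk₂, hsum⟩ := hmem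
  have h1 : (m : ℤ) * k₁ = a := by
    by_contra h
    exact (Finsupp.mem_support_iff.mp hk₁) (hf k₁ h)
  have h2 : (m : ℤ) * k₂ = b := by
    by_contra h
    exact (Finsupp.mem_support_iff.mp hk₂) (hg k₂ h)
  exact hk (by rw [← hsum, mul_add, h1, h2])

def StronglyGradedZ {S : Type} [Ring S] (c : ℤ → AddSubgroup S) : Prop :=
  ∀ a b : ℤ, c (a + b) ≤ AddSubgroup.closure ((c a : Set S) * (c b : Set S))

def IsCrossedProductZ {S : Type} [Ring S] (c : ℤ → AddSubgroup S) : Prop :=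
  ∀ d : ℤ, ∃ u : Sˣ, (u : S) ∈ c d

def IsSkewGroupRingZ {S : Type} [Ring S] (c : ℤ → AddSubgroup S) : Prop :=
  ∃ σ : ℤ → Sˣ, (∀ a b : ℤ, σ (a + b) = σ a * σ b) ∧ ∀ d : ℤ, ((σ d : Sˣ) : S) ∈ c d

def laurentMatrixZeroSubring (K : Type) [Field K] (m n : ℕ) (γv : Fin n → ℤ) :
    Subring (Matrix (Fin n) (Fin n) (AddMonoidAlgebra K ℤ)) where
  carrier := matrixComponentZ (laurentComponent K m) n γv 0
  add_mem' := add_mem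
  zero_mem' := zero_mem _
  neg_mem' := neg_mem
  one_mem' := by
    intro i j
    by_cases h : i = j
    · subst h
      rw [Matrix.one_apply_eq]
      have hh : -(γv i) + 0 + γv i = 0 := by ring
      rw [hh]
      intro k hk
      have hk0 : k ≠ 0 := by
        intro h0; exact hk (by rw [h0, mul_zero])
      show ((AddMonoidAlgebra.single (0 : ℤ) (1 : K))).coeff k = 0
      exact Finsupp.single_eq_of_ne' (Ne.symm hk0)
    · rw [Matrix.one_apply_ne h]
      exact zero_mem _
  mul_mem' := by
    intro a b ha hb i j
    show (a * b) i j ∈ _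
    rw [Matrix.mul_apply]
    refine AddSubgroup.sum_mem _ fun k _ => ?_
    have h := laurentComponent_mul (ha i k) (hb k j)
    have hh : -(γv i) + 0 + γv k + (-(γv k) + 0 + γv j) = -(γv i) + 0 + γv j := by ring
    rwa [hh] at h

def addMonoidAlgebraComponentZ (A : Type) [Ring A] (d : ℤ) :
    AddSubgroup (AddMonoidAlgebra A ℤ) where
  carrier := {f | ∀ k : ℤ, k ≠ d → f.coeff k = 0}
  add_mem' := by
    intro f h hf hh k hk
    show (f.coeff + h.coeff) k = 0
    rw [Finsupp.add_apply, hf k hk, hh k hk, add_zero]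
  zero_mem' := fun k _ => rfl
  neg_mem' := by
    intro f hf k hk
    show (-f.coeff) k = 0
    rw [Finsupp.neg_apply, hf k hk, neg_zero]

theorem stronglyGradedZ_iff_one_mem_closure {S : Type} [Ring S] (c : ℤ → AddSubgroup S)
    [SetLike.GradedMonoid c] :
    StronglyGradedZ c ↔
      ∀ d, (1 : S) ∈ AddSubgroup.closure ((c d : Set S) * (c (-d) : Set S)) := by
  refine ⟨fun h d => h d (-d) ?_, fun h a b x hx => ?_⟩
  · rw [add_neg_cancel]
    exact SetLike.one_mem_graded c
  · -- `x = x * 1` with `1 ∈ closure (c (-b) * c b)`, and `x * c (-b) ⊆ c a`.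
    have h1 := h (-b)
    rw [neg_neg] at h1
    simpa using AddSubgroup.closure_induction
      (p := fun y _ => x * y ∈ AddSubgroup.closure ((c a : Set S) * (c b : Set S)))
      (fun y hy => by
        obtain ⟨u, hu, v, hv, rfl⟩ := hy
        have hxu : x * u ∈ c a := by
          simpa using SetLike.mul_mem_graded hx hu
        rw [← mul_assoc]
        exact AddSubgroup.subset_closure (Set.mul_mem_mul hxu hv))
      (by simp)
      (fun y z _ _ hy hz => by simpa [mul_add] using add_mem hy hz)
      (fun y _ hy => by simpa using neg_mem hy) h1

section Laurent

variable {K : Type} [Field K] {m : ℕ}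

theorem single_mem_laurentComponent (k : ℤ) (a : K) :
    AddMonoidAlgebra.single k a ∈ laurentComponent K m (m * k) :=
  fun _ hk' => Finsupp.single_eq_of_ne' fun h => hk' (by rw [h])

theorem laurentComponent_eq_bot_of_not_dvd {d : ℤ} (hd : ¬ (m : ℤ) ∣ d) :
    laurentComponent K m d = ⊥ := by
  refine (AddSubgroup.eq_bot_iff_forall _).mpr fun f hf => ?_
  exact AddMonoidAlgebra.ext (Finsupp.ext fun k => hf k fun hk => hd ⟨k, hk.symm⟩)

instance : SetLike.GradedMonoid (laurentComponent K m) where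
  one_mem := by simpa using single_mem_laurentComponent (K := K) (m := m) 0 1
  mul_mem _ _ _ _ := laurentComponent_mul

end Laurent

section GradedMatrix

variable {R : Type} [Ring R] {c : ℤ → AddSubgroup R} {n : ℕ} {γv : Fin n → ℤ}

instance [SetLike.GradedMonoid c] : SetLike.GradedMonoid (matrixComponentZ c n γv) where
  one_mem i j := by
    by_cases h : i = j
    · subst h
      simpa using SetLike.one_mem_graded c
    · rw [Matrix.one_apply_ne h]
      exact zero_mem _
  mul_mem a b x y hx hy i j := by
    show (x * y) i j ∈ _
    rw [Matrix.mul_apply]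
    refine sum_mem fun k _ => ?_
    convert SetLike.mul_mem_graded (hx i k) (hy k j) using 2
    ring

theorem single_mem_matrixComponentZ {i j : Fin n} {d : ℤ} {r : R}
    (hr : r ∈ c (-(γv i) + d + γv j)) : Matrix.single i j r ∈ matrixComponentZ c n γv d := by
  intro p q
  by_cases h : i = p ∧ j = q
  · obtain ⟨rfl, rfl⟩ := h
    rwa [Matrix.single_apply_same]
  · rw [Matrix.single_apply_of_ne _ _ _ _ _ h]
    exact zero_mem _

theorem one_mem_closure_matrixComponentZ {d : ℤ}
    (h : ∀ i, ∃ j, ∃ u ∈ c (-(γv i) + d + γv j), ∃ v ∈ c (-(γv j) + -d + γv i), u * v = 1) :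
    (1 : Matrix (Fin n) (Fin n) R) ∈ AddSubgroup.closure
      ((matrixComponentZ c n γv d : Set _) * (matrixComponentZ c n γv (-d) : Set _)) := by
  choose j u hu v hv huv using h
  rw [← Matrix.sum_single_one]
  refine sum_mem fun i _ => AddSubgroup.subset_closure ?_
  have hprod := Set.mul_mem_mul (single_mem_matrixComponentZ (hu i))
    (single_mem_matrixComponentZ (hv i))
  rwa [Matrix.single_mul_single_same, huv] at hprod

theorem row_eq_zero_of_mem_closure_matrixComponentZ {d : ℤ} {i : Fin n}
    (h : ∀ j, c (-(γv i) + d + γv j) = ⊥) {t : Set (Matrix (Fin n) (Fin n) R)}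
    {M : Matrix (Fin n) (Fin n) R}
    (hM : M ∈ AddSubgroup.closure ((matrixComponentZ c n γv d : Set _) * t)) : M i = 0 := by
  refine (AddSubgroup.closure_le (AddMonoidHom.ker (Pi.evalAddMonoidHom _ i))).mpr ?_ hM
  rintro _ ⟨X, hX, Y, -, rfl⟩
  have hrow : ∀ j, X i j = 0 := fun j => by simpa [h j] using hX i j
  ext j
  show (X * Y) i j = 0
  simp [Matrix.mul_apply, hrow]

end GradedMatrix

theorem stronglyGradedZ_laurentMatrix_iff_forall_exists_dvd {K : Type} [Field K] {m n : ℕ} {γv : Fin n → ℤ} :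
    StronglyGradedZ (matrixComponentZ (laurentComponent K m) n γv) ↔
      ∀ d i, ∃ j, (m : ℤ) ∣ -(γv i) + d + γv j := by
  rw [stronglyGradedZ_iff_one_mem_closure]
  refine ⟨fun h d i => ?_, fun h d => one_mem_closure_matrixComponentZ fun i => ?_⟩
  · by_contra! hno
    have hrow := row_eq_zero_of_mem_closure_matrixComponentZ
      (fun j => laurentComponent_eq_bot_of_not_dvd (K := K) (hno j)) (h d)
    simpa using congrFun hrow i
  · obtain ⟨j, k, hk⟩ := h d i
    have hk' : -(γv j) + -d + γv i = m * -k := by linarith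
    refine ⟨j, _, hk ▸ single_mem_laurentComponent k 1, _,
      hk' ▸ single_mem_laurentComponent (-k) 1, ?_⟩
    rw [AddMonoidAlgebra.single_mul_single, add_neg_cancel, one_mul, AddMonoidAlgebra.one_def]

theorem forall_exists_dvd_iff_surjective_intCast {ι : Type*} [Nonempty ι] (m : ℕ) (γ : ι → ℤ) :
    (∀ d i, ∃ j, (m : ℤ) ∣ -(γ i) + d + γ j) ↔ Function.Surjective fun i => (γ i : ZMod m) := by
  refine ⟨fun h r => ?_, fun h d i => ?_⟩
  · obtain ⟨t, rfl⟩ := ZMod.intCast_surjective r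
    obtain ⟨j, hj⟩ := h (γ (Classical.arbitrary ι) - t) (Classical.arbitrary ι)
    refine ⟨j, ((ZMod.intCast_eq_intCast_iff_dvd_sub _ _ _).mpr ?_).symm⟩
    convert hj using 1
    ring
  · obtain ⟨j, hj⟩ := h ((γ i - d : ℤ) : ZMod m)
    refine ⟨j, ?_⟩
    have hdvd := (ZMod.intCast_eq_intCast_iff_dvd_sub _ _ _).mp hj.symm
    convert hdvd using 1
    ring

theorem forall_ncard_pos_iff_surjective_intCast {ι : Type*} [Finite ι] {m : ℕ} (hm : 0 < m)
    (γ : ι → ℤ) :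
    (∀ j : ℕ, j < m → 0 < {i | γ i % (m : ℤ) = j}.ncard) ↔
      Function.Surjective fun i => (γ i : ZMod m) := by
  have : NeZero m := ⟨hm.ne'⟩
  refine ⟨fun h r => ?_, fun h j hj => ?_⟩
  · obtain ⟨i, hi⟩ := (Set.ncard_pos (Set.toFinite _)).mp (h r.val (ZMod.val_lt r))
    refine ⟨i, ?_⟩
    show (γ i : ZMod m) = r
    rw [← ZMod.intCast_mod, show γ i % m = r.val from hi, Int.cast_natCast,
      ZMod.natCast_zmod_val]
  · obtain ⟨i, hi⟩ := h ((j : ℤ) : ZMod m)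
    refine (Set.ncard_pos (Set.toFinite _)).mpr ⟨i, ?_⟩
    show γ i % m = j
    rw [(ZMod.intCast_eq_intCast_iff' _ _ _).mp hi]
    exact Int.emod_eq_of_lt (by positivity) (by exact_mod_cast hj)

/-- `Mₙ(K[x^m, x^{-m}])(γ₁, …, γₙ)` is strongly graded iff each of the
counts `k_j = #{i | γᵢ ≡ j (mod m)}`, `j = 0, …, m-1`, is positive. -/
theorem laurentMatrix_stronglyGraded_iff (K : Type) [Field K] (m n : ℕ) (hm : 0 < m)
    (hn : 0 < n) (γv : Fin n → ℤ) :
    StronglyGradedZ (matrixComponentZ (laurentComponent K m) n γv) ↔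
      ∀ j : ℕ, j < m → 0 < {i : Fin n | γv i % (m : ℤ) = (j : ℤ)}.ncard := by
  have : Nonempty (Fin n) := ⟨⟨0, hn⟩⟩
  rw [stronglyGradedZ_laurentMatrix_iff_forall_exists_dvd, forall_exists_dvd_iff_surjective_intCast,
    forall_ncard_pos_iff_surjective_intCast hm]
end
end
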